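/- Let K be a field of characteristic zero, V a finite-dimensional K-vector space, and n a natural number with dim_K V ≥ n. Then the K-algebra homomorphism Φ_V : K[S_n] → End_K(V^{⊗n}) determined by σ ↦ L_σ^{(n)} is injective; equivalently, the endomorphisms {L_σ^{(n)} : σ ∈ S_n} of V^{⊗n} are linearly independent over K. -/

import Mathlib

open scoped TensorProduct

/-- The endomorphism `L_σ^{(n)}` of the `n`-th tensor power of `V`, determined by
`v_1 ⊗ ⋯ ⊗ v_n ↦ v_{σ⁻¹(1)} ⊗ ⋯ ⊗ v_{σ⁻¹(n)}`. -/
noncomputable def permMap (K : Type*) [Field K] (V : Type*) [AddCommGroup V] [Module K V]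
    (n : ℕ) (σ : Equiv.Perm (Fin n)) :
    (⨂[K] _ : Fin n, V) →ₗ[K] ⨂[K] _ : Fin n, V :=
  (PiTensorProduct.reindex K (fun _ : Fin n => V) σ).toLinearMap

/-- The endomorphism `T^{⊗n}` of the `n`-th tensor power of `V` induced by `T : V →ₗ[K] V`. -/
noncomputable def tpowMap (K : Type*) [Field K] (V : Type*) [AddCommGroup V] [Module K V]
    (n : ℕ) (T : V →ₗ[K] V) :
    (⨂[K] _ : Fin n, V) →ₗ[K] ⨂[K] _ : Fin n, V :=
  PiTensorProduct.map fun _ => T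

/-- The `K`-linear map `Φ_V : K[S_n] → End_K(V^{⊗n})` determined by `σ ↦ L_σ^{(n)}`. -/
noncomputable def PhiMap (K : Type*) [Field K] (V : Type*) [AddCommGroup V] [Module K V]
    (n : ℕ) :
    MonoidAlgebra K (Equiv.Perm (Fin n)) →ₗ[K] Module.End K (⨂[K] _ : Fin n, V) :=
  Finsupp.linearCombination K (permMap K V n) ∘ₗ
    (MonoidAlgebra.coeffLinearEquiv K).toLinearMap

section

variable {K : Type*} [Field K] {V : Type*} [AddCommGroup V] [Module K V] {n : ℕ}

theorem permMap_tprod (σ : Equiv.Perm (Fin n)) (v : Fin n → V) :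
    permMap K V n σ (⨂ₜ[K] i, v i) = ⨂ₜ[K] i, v (σ⁻¹ i) :=
  PiTensorProduct.reindex_tprod σ v

/-- Applied to the pure tensor `b (e 1) ⊗ ⋯ ⊗ b (e n)` of distinct basis vectors, the maps
`L_σ` produce pairwise distinct elements of the product basis of the tensor power. -/
theorem linearIndependent_permMap_apply_tprod {ι : Type*} (b : Module.Basis ι K V)
    {e : Fin n → ι} (he : Function.Injective e) :
    LinearIndependent K fun σ : Equiv.Perm (Fin n) => permMap K V n σ (⨂ₜ[K] i, b (e i)) := by
  have hinj : Function.Injective fun σ : Equiv.Perm (Fin n) => e ∘ ⇑σ⁻¹ := by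
    intro σ τ h
    exact inv_injective (Equiv.ext fun i => he (congrFun h i))
  have hfamily : (fun σ : Equiv.Perm (Fin n) => permMap K V n σ (⨂ₜ[K] i, b (e i))) =
      (Basis.piTensorProduct fun _ : Fin n => b) ∘ fun σ : Equiv.Perm (Fin n) => e ∘ ⇑σ⁻¹ := by
    ext σ
    simp [permMap_tprod, Basis.piTensorProduct_apply]
  rw [hfamily]
  exact (Basis.piTensorProduct _).linearIndependent.comp _ hinj

theorem linearIndependent_permMap {ι : Type*} (b : Module.Basis ι K V) {e : Fin n → ι}
    (he : Function.Injective e) : LinearIndependent K (permMap K V n) :=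
  .of_comp (LinearMap.applyₗ (⨂ₜ[K] i, b (e i)))
    (linearIndependent_permMap_apply_tprod b he)

theorem injective_PhiMap_iff :
    Function.Injective (PhiMap K V n) ↔ LinearIndependent K (permMap K V n) := by
  rw [PhiMap, LinearMap.coe_comp, LinearEquiv.coe_toLinearMap, EquivLike.injective_comp]
  rfl

end

theorem stmt3_general (K : Type*) [Field K] (V : Type*) [AddCommGroup V] [Module K V]
    [FiniteDimensional K V] (n : ℕ) (hn : n ≤ Module.finrank K V) :
    Function.Injective (PhiMap K V n) ∧ LinearIndependent K (permMap K V n) := by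
  have h := linearIndependent_permMap (Module.finBasis K V) (Fin.castLE_injective hn)
  exact ⟨injective_PhiMap_iff.mpr h, h⟩

/-- if `dim_K V ≥ n` then `Φ_V : K[S_n] → End_K(V^{⊗n})`, `σ ↦ L_σ^{(n)}`,
is injective; equivalently, the endomorphisms `L_σ^{(n)}` are linearly independent. -/
theorem stmt3 (K : Type*) [Field K] [CharZero K] (V : Type*) [AddCommGroup V] [Module K V]
    [FiniteDimensional K V] (n : ℕ) (hn : n ≤ Module.finrank K V) :
    Function.Injective (PhiMap K V n) ∧ LinearIndependent K (permMap K V n) :=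
  stmt3_general K V n hn
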